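/- arXiv:1902.02763 — 4 statements merged into one kernel-verified Lean document; each statement's English description precedes it below -/
import Mathlib

section
/- There exist constants c > 0 and m₀ ≥ 2 such that the following holds for every integer m ≥ m₀. Let G = (X, Y, E) be a finite bipartite graph with |X| = m in which every vertex of X has at least one neighbor and whose maximum matching has size m (equivalently, some matching of G saturates X). If each u ∈ X independently selects one of its neighbors in Y uniformly at random, then with probability at least c, the number of distinct vertices of Y that are selected by at least one vertex of X is at least √m / log m. -/
/-!
Let `E = ∑ᵤ 1 / deg u` and `k = ⌈√m / log m⌉`, so that `18 k² ≤ m` once `log m ≥ 12`.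

If `E ≥ 2k`, count the vertices `u` whose choice agrees with a saturating matching `M`. This count
has mean `E` and second moment at most `E² + E`, so by Paley–Zygmund it is at least `E / 2 ≥ k`
with probability at least `1/8`; as `M` is injective, these choices are distinct.

If `E < 2k`, fewer than `16 k²` vertices have degree below `8k`, so there is a set `T` of `2k`
vertices of degree at least `8k`. Two of them choose the same vertex with probability at most
`1 / (8k)`, so the expected number of ordered collisions inside `T` is at most `k / 2`. By Markov,
with probability at least `1/2` there are fewer than `k` collisions, and then `T` alone selects
more than `k` distinct vertices.
-/

open MeasureTheory Finset

/-- The product measure on `X → Y` in which each `u : X` independently selects one of its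
neighbors `N u` uniformly at random. -/
noncomputable def selMeasure {X Y : Type} [Fintype X] (N : X → Finset Y)
    (hN : ∀ u, (N u).Nonempty) :
    @Measure (X → Y) (@MeasurableSpace.pi X (fun _ => Y) (fun _ => ⊤)) :=
  @Measure.pi X (fun _ => Y) _ (fun _ => ⊤) fun u =>
    @PMF.toMeasure Y ⊤ (PMF.uniformOfFinset (N u) (hN u))

section WeightedTails

variable {ι : Type*} [Fintype ι] {w g : ι → ℝ}

theorem markov_lower_tail (hw : ∀ i, 0 ≤ w i) (hw1 : ∑ i, w i = 1) (hg : ∀ i, 0 ≤ g i)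
    {t : ℝ} (ht : 0 < t) :
    1 - (∑ i, w i * g i) / t ≤ ∑ i with g i < t, w i := by
  have hupper : ∑ i with ¬ g i < t, w i ≤ (∑ i, w i * g i) / t := by
    rw [le_div_iff₀ ht, sum_mul]
    calc ∑ i with ¬ g i < t, w i * t
        ≤ ∑ i with ¬ g i < t, w i * g i :=
          sum_le_sum fun i hi => mul_le_mul_of_nonneg_left (not_lt.1 (mem_filter.1 hi).2) (hw i)
      _ ≤ ∑ i, w i * g i :=
          sum_le_sum_of_subset_of_nonneg (filter_subset _ _) fun i _ _ => mul_nonneg (hw i) (hg i)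
  have hsplit := sum_filter_add_sum_filter_not univ (fun i => g i < t) w
  linarith

theorem paley_zygmund (hw : ∀ i, 0 ≤ w i) (hw1 : ∑ i, w i = 1) {t : ℝ} (ht : 0 ≤ t)
    (htE : t ≤ ∑ i, w i * g i) :
    (∑ i, w i * g i - t) ^ 2 ≤ (∑ i with t ≤ g i, w i) * ∑ i, w i * g i ^ 2 := by
  have hlow : ∑ i with ¬ t ≤ g i, w i * g i ≤ t := calc
    ∑ i with ¬ t ≤ g i, w i * g i ≤ (∑ i with ¬ t ≤ g i, w i) * t := by
        rw [sum_mul]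
        exact sum_le_sum fun i hi =>
          mul_le_mul_of_nonneg_left (not_le.1 (mem_filter.1 hi).2).le (hw i)
    _ ≤ 1 * t := by
        gcongr
        exact hw1 ▸ sum_le_sum_of_subset_of_nonneg (filter_subset _ _) fun i _ _ => hw i
    _ = t := one_mul t
  have hpart : ∑ i, w i * g i - t ≤ ∑ i with t ≤ g i, w i * g i := by
    have := sum_filter_add_sum_filter_not univ (fun i => t ≤ g i) (fun i => w i * g i)
    linarith
  calc (∑ i, w i * g i - t) ^ 2 ≤ (∑ i with t ≤ g i, w i * g i) ^ 2 :=
        pow_le_pow_left₀ (by linarith) hpart 2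
    _ ≤ (∑ i with t ≤ g i, w i) * ∑ i with t ≤ g i, w i * g i ^ 2 :=
        sum_sq_le_sum_mul_sum_of_sq_le_mul _ (fun i _ => hw i)
          (fun i _ => mul_nonneg (hw i) (sq_nonneg _)) fun i _ => le_of_eq (by ring)
    _ ≤ (∑ i with t ≤ g i, w i) * ∑ i, w i * g i ^ 2 :=
        mul_le_mul_of_nonneg_left
          (sum_le_sum_of_subset_of_nonneg (filter_subset _ _) fun i _ _ =>
            mul_nonneg (hw i) (sq_nonneg _))
          (sum_nonneg fun i _ => hw i)

end WeightedTails

section SelectionWeights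

variable {X Y : Type*} [DecidableEq Y] (N : X → Finset Y)

noncomputable def selProb (u : X) (a : Y) : ℝ :=
  if a ∈ N u then (#(N u) : ℝ)⁻¹ else 0

noncomputable def selWeight [Fintype X] (f : X → Y) : ℝ :=
  ∏ u, selProb N u (f u)

lemma selProb_nonneg (u : X) (a : Y) : 0 ≤ selProb N u a := by
  unfold selProb; split <;> positivity

lemma selProb_le_inv_card (u : X) (a : Y) : selProb N u a ≤ (#(N u) : ℝ)⁻¹ := by
  unfold selProb; split
  exacts [le_rfl, by positivity]

lemma selProb_of_mem {u : X} {a : Y} (ha : a ∈ N u) : selProb N u a = (#(N u) : ℝ)⁻¹ :=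
  if_pos ha

lemma sum_selProb [Fintype Y] {u : X} (hu : (N u).Nonempty) : ∑ a, selProb N u a = 1 := by
  simp only [selProb]
  rw [sum_ite_mem, univ_inter, sum_const, nsmul_eq_mul,
    mul_inv_cancel₀ (Nat.cast_ne_zero.2 hu.card_pos.ne')]

lemma selWeight_nonneg [Fintype X] (f : X → Y) : 0 ≤ selWeight N f :=
  prod_nonneg fun u _ => selProb_nonneg N u (f u)

lemma sum_selWeight_filter_mono [Fintype X] [DecidableEq X] [Fintype Y]
    {p q : (X → Y) → Prop} [DecidablePred p] [DecidablePred q] (hpq : ∀ f, p f → q f) :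
    ∑ f with p f, selWeight N f ≤ ∑ f with q f, selWeight N f :=
  sum_le_sum_of_subset_of_nonneg (monotone_filter_right _ fun f _ => hpq f)
    fun f _ _ => selWeight_nonneg N f

lemma sum_selWeight_mul_prod [Fintype X] [DecidableEq X] [Fintype Y] (hN : ∀ u, (N u).Nonempty)
    (S : Finset X) (φ : X → Y → ℝ) :
    ∑ f, selWeight N f * ∏ u ∈ S, φ u (f u) = ∏ u ∈ S, ∑ a, selProb N u a * φ u a := by
  have hφ : ∀ u, ∑ a, selProb N u a * (if u ∈ S then φ u a else 1)
      = if u ∈ S then ∑ a, selProb N u a * φ u a else 1 := by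
    intro u
    split_ifs <;> simp [sum_selProb N (hN u)]
  calc ∑ f, selWeight N f * ∏ u ∈ S, φ u (f u)
      = ∑ f : X → Y, ∏ u, selProb N u (f u) * (if u ∈ S then φ u (f u) else 1) := by
        simp_rw [prod_mul_distrib, Fintype.prod_extend_by_one, selWeight]
    _ = ∏ u, ∑ a, selProb N u a * (if u ∈ S then φ u a else 1) := by
        rw [prod_univ_sum]
        rfl
    _ = ∏ u ∈ S, ∑ a, selProb N u a * φ u a := by
        simp_rw [hφ]
        exact Fintype.prod_extend_by_one S _

end SelectionWeights

section SelectionMeasure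

variable {X Y : Type} [Fintype X] [Fintype Y] [DecidableEq Y] (N : X → Finset Y)
  (hN : ∀ u, (N u).Nonempty)

lemma selMeasure_singleton (f : X → Y) :
    selMeasure N hN {f} = ENNReal.ofReal (selWeight N f) := by
  let : MeasurableSpace Y := ⊤
  have hu : ∀ u, (PMF.uniformOfFinset (N u) (hN u)).toMeasure {f u}
      = ENNReal.ofReal (selProb N u (f u)) := by
    intro u
    rw [PMF.toMeasure_apply_singleton _ _ (measurableSet_singleton _),
      PMF.uniformOfFinset_apply, selProb]
    split
    · rw [ENNReal.ofReal_inv_of_pos (by exact_mod_cast (hN u).card_pos), ENNReal.ofReal_natCast]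
    · simp
  rw [selMeasure, Measure.pi_singleton, selWeight,
    ENNReal.ofReal_prod_of_nonneg fun u _ => selProb_nonneg N u (f u)]
  exact prod_congr rfl fun u _ => hu u

lemma selMeasure_apply [DecidableEq X] (S : Set (X → Y)) [DecidablePred (· ∈ S)] :
    selMeasure N hN S = ENNReal.ofReal (∑ f with f ∈ S, selWeight N f) := by
  let : MeasurableSpace Y := ⊤
  calc selMeasure N hN S = ∑ f with f ∈ S, selMeasure N hN {f} := by
        rw [sum_measure_singleton]
        congr 1
        ext f
        simp
    _ = ENNReal.ofReal (∑ f with f ∈ S, selWeight N f) := by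
        rw [ENNReal.ofReal_sum_of_nonneg fun f _ => selWeight_nonneg N f]
        exact sum_congr rfl fun f _ => selMeasure_singleton N hN f

end SelectionMeasure

section Moments

variable {X Y : Type*} [Fintype X] [DecidableEq X] [Fintype Y] [DecidableEq Y]
  {N : X → Finset Y}

lemma sum_selWeight (hN : ∀ u, (N u).Nonempty) : ∑ f, selWeight N f = 1 := by
  simpa using sum_selWeight_mul_prod N hN ∅ fun _ _ => 1

lemma sum_selWeight_mul_apply (hN : ∀ u, (N u).Nonempty) (u : X) (g : Y → ℝ) :
    ∑ f, selWeight N f * g (f u) = ∑ a, selProb N u a * g a := by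
  simpa using sum_selWeight_mul_prod N hN {u} fun _ => g

lemma sum_selWeight_mul_apply_mul_apply (hN : ∀ u, (N u).Nonempty) {u v : X} (huv : u ≠ v)
    (g h : Y → ℝ) :
    ∑ f, selWeight N f * (g (f u) * h (f v))
      = (∑ a, selProb N u a * g a) * ∑ a, selProb N v a * h a := by
  simpa [prod_pair huv, huv.symm] using
    sum_selWeight_mul_prod N hN {u, v} fun t => if t = u then g else h

lemma sum_selWeight_mul_ite_eq_le (hN : ∀ u, (N u).Nonempty) {u v : X} (huv : u ≠ v) :
    ∑ f, selWeight N f * (if f u = f v then 1 else 0) ≤ (#(N v) : ℝ)⁻¹ := by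
  have hind : ∀ f : X → Y, (if f u = f v then (1 : ℝ) else 0)
      = ∑ c, (if f u = c then 1 else 0) * (if f v = c then 1 else 0) := by
    intro f
    simp [sum_ite_eq]
  calc ∑ f, selWeight N f * (if f u = f v then 1 else 0)
      = ∑ c, selProb N u c * selProb N v c := by
        simp_rw [hind, mul_sum]
        rw [sum_comm]
        refine sum_congr rfl fun c _ => ?_
        rw [sum_selWeight_mul_apply_mul_apply hN huv (fun a => if a = c then 1 else 0)
          (fun a => if a = c then 1 else 0)]
        simp
    _ ≤ ∑ c, selProb N u c * (#(N v) : ℝ)⁻¹ :=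
        sum_le_sum fun c _ =>
          mul_le_mul_of_nonneg_left (selProb_le_inv_card N v c) (selProb_nonneg N u c)
    _ = (#(N v) : ℝ)⁻¹ := by rw [← sum_mul, sum_selProb N (hN u), one_mul]

end Moments

section Matching

def agreeCount {X Y : Type*} [Fintype X] [DecidableEq Y] (M f : X → Y) : ℕ :=
  #{u | f u = M u}

lemma agreeCount_le_card_image {X Y : Type*} [Fintype X] [DecidableEq Y] {M : X → Y}
    (hM : M.Injective) (f : X → Y) : agreeCount M f ≤ #(univ.image f) :=
  card_le_card_of_injOn f (fun u _ => mem_image_of_mem f (mem_univ u)) fun u hu v hv huv =>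
    hM <| by rw [← (mem_filter.1 hu).2, ← (mem_filter.1 hv).2, huv]

variable {X Y : Type*} [Fintype X] [DecidableEq X] [Fintype Y] [DecidableEq Y]
  {N : X → Finset Y} {M : X → Y}

lemma sum_selWeight_mul_agreeCount (hN : ∀ u, (N u).Nonempty) (hMN : ∀ u, M u ∈ N u) :
    ∑ f, selWeight N f * agreeCount M f = ∑ u, (#(N u) : ℝ)⁻¹ := by
  simp_rw [agreeCount, natCast_card_filter, mul_sum]
  rw [sum_comm]
  refine sum_congr rfl fun u _ => ?_
  rw [sum_selWeight_mul_apply hN u fun a => if a = M u then 1 else 0]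
  simp [selProb_of_mem N (hMN u)]

lemma sum_selWeight_mul_agreeCount_sq_le (hN : ∀ u, (N u).Nonempty) (hMN : ∀ u, M u ∈ N u) :
    ∑ f, selWeight N f * (agreeCount M f : ℝ) ^ 2
      ≤ (∑ u, (#(N u) : ℝ)⁻¹) ^ 2 + ∑ u, (#(N u) : ℝ)⁻¹ := by
  set p : X → ℝ := fun u => (#(N u) : ℝ)⁻¹
  have hpair : ∀ u v, ∑ f, selWeight N f *
      ((if f u = M u then 1 else 0) * (if f v = M v then 1 else 0))
        ≤ p u * p v + if u = v then p u else 0 := by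
    intro u v
    by_cases huv : u = v
    · subst huv
      have hsq : ∀ f : X → Y, (if f u = M u then (1 : ℝ) else 0) * (if f u = M u then 1 else 0)
          = if f u = M u then 1 else 0 := fun f => by split_ifs <;> norm_num
      simp_rw [hsq]
      rw [sum_selWeight_mul_apply hN u fun a => if a = M u then 1 else 0]
      simp [selProb_of_mem N (hMN u), p, mul_self_nonneg]
    · rw [sum_selWeight_mul_apply_mul_apply hN huv (fun a => if a = M u then 1 else 0)
        (fun a => if a = M v then 1 else 0)]
      simp [selProb_of_mem N (hMN _), huv, p]
  calc ∑ f, selWeight N f * (agreeCount M f : ℝ) ^ 2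
      = ∑ u, ∑ v, ∑ f, selWeight N f *
          ((if f u = M u then 1 else 0) * (if f v = M v then 1 else 0)) := by
        simp_rw [agreeCount, natCast_card_filter, sq, sum_mul_sum, mul_sum]
        rw [sum_comm]
        exact sum_congr rfl fun u _ => sum_comm
    _ ≤ ∑ u, ∑ v, (p u * p v + if u = v then p u else 0) :=
        sum_le_sum fun u _ => sum_le_sum fun v _ => hpair u v
    _ = (∑ u, p u) ^ 2 + ∑ u, p u := by
        simp [sum_add_distrib, sq, sum_mul_sum]

theorem one_eighth_le_sum_selWeight_of_matching (hN : ∀ u, (N u).Nonempty) (hM : M.Injective)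
    (hMN : ∀ u, M u ∈ N u) (hE : 1 ≤ ∑ u, (#(N u) : ℝ)⁻¹) :
    (8 : ℝ)⁻¹ ≤ ∑ f with (∑ u, (#(N u) : ℝ)⁻¹) / 2 ≤ #(univ.image f), selWeight N f := by
  set E := ∑ u, (#(N u) : ℝ)⁻¹
  have hPZ := paley_zygmund (selWeight_nonneg N) (sum_selWeight hN) (by positivity)
    (g := fun f => (agreeCount M f : ℝ)) (t := E / 2)
  rw [sum_selWeight_mul_agreeCount hN hMN] at hPZ
  have hZ2 := sum_selWeight_mul_agreeCount_sq_le hN hMN (M := M)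
  have hPA : (8 : ℝ)⁻¹ ≤ ∑ f with E / 2 ≤ agreeCount M f, selWeight N f := by
    have hP := sum_nonneg fun f (_ : f ∈ univ.filter fun f => E / 2 ≤ agreeCount M f) =>
      selWeight_nonneg N f
    nlinarith [hPZ (by linarith), mul_le_mul_of_nonneg_left hZ2 hP]
  exact hPA.trans <| sum_selWeight_filter_mono N fun f h =>
    h.trans (by exact_mod_cast agreeCount_le_card_image hM f)

end Matching

section Collisions

variable {X Y : Type*} [DecidableEq X] [DecidableEq Y]

def collisions (T : Finset X) (f : X → Y) : ℕ :=
  ∑ u ∈ T, #{v ∈ T.erase u | f u = f v}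

lemma card_le_card_image_add_collisions (T : Finset X) (f : X → Y) :
    #T ≤ #(T.image f) + collisions T f := by
  set c : X → ℕ := fun u => #{v ∈ T.erase u | f u = f v}
  have hunique : #{u ∈ T | c u = 0} ≤ #(T.image f) := by
    refine card_le_card_of_injOn f (fun u hu => mem_image_of_mem f (mem_filter.1 hu).1)
      fun u hu v hv huv => ?_
    by_contra hne
    have hv' : v ∈ {w ∈ T.erase u | f u = f w} :=
      mem_filter.2 ⟨mem_erase.2 ⟨Ne.symm hne, (mem_filter.1 hv).1⟩, huv⟩
    rw [card_eq_zero.1 (mem_filter.1 hu).2] at hv'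
    exact notMem_empty v hv'
  have hshared : #{u ∈ T | ¬c u = 0} ≤ collisions T f :=
    calc #{u ∈ T | ¬c u = 0} = ∑ u ∈ T with ¬c u = 0, 1 := card_eq_sum_ones _
      _ ≤ ∑ u ∈ T with ¬c u = 0, c u :=
          sum_le_sum fun u hu => Nat.one_le_iff_ne_zero.2 (mem_filter.1 hu).2
      _ ≤ ∑ u ∈ T, c u := sum_le_sum_of_subset (filter_subset _ _)
  have := card_filter_add_card_filter_not (s := T) fun u => c u = 0
  omega

lemma sum_selWeight_mul_collisions_le [Fintype X] [Fintype Y] {N : X → Finset Y}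
    (hN : ∀ u, (N u).Nonempty) {T : Finset X} {d : ℕ} (hd : 0 < d)
    (hTd : ∀ u ∈ T, d ≤ #(N u)) :
    ∑ f, selWeight N f * collisions T f ≤ (#T : ℝ) ^ 2 / d := by
  calc ∑ f, selWeight N f * collisions T f
      = ∑ u ∈ T, ∑ v ∈ T.erase u, ∑ f, selWeight N f * (if f u = f v then 1 else 0) := by
        simp_rw [collisions, Nat.cast_sum, natCast_card_filter, mul_sum]
        rw [sum_comm]
        exact sum_congr rfl fun u _ => sum_comm
    _ ≤ ∑ u ∈ T, ∑ v ∈ T.erase u, (d : ℝ)⁻¹ :=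
        sum_le_sum fun u _ => sum_le_sum fun v hv =>
          (sum_selWeight_mul_ite_eq_le hN (ne_of_mem_erase hv).symm).trans <|
            inv_anti₀ (by exact_mod_cast hd) (by exact_mod_cast hTd v (mem_of_mem_erase hv))
    _ ≤ ∑ u ∈ T, ∑ v ∈ T, (d : ℝ)⁻¹ :=
        sum_le_sum fun u _ =>
          sum_le_sum_of_subset_of_nonneg (erase_subset u T) fun _ _ _ => by positivity
    _ = (#T : ℝ) ^ 2 / d := by simp [sq, div_eq_mul_inv, mul_assoc]

theorem half_le_sum_selWeight_of_forall_le_card [Fintype X] [Fintype Y] {N : X → Finset Y}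
    (hN : ∀ u, (N u).Nonempty) {k : ℕ} (hk : 0 < k) {T : Finset X} (hT : #T = 2 * k)
    (hTd : ∀ u ∈ T, 8 * k ≤ #(N u)) :
    (2 : ℝ)⁻¹ ≤ ∑ f with k ≤ #(univ.image f), selWeight N f := by
  have hkR : (0 : ℝ) < k := by exact_mod_cast hk
  have hC : (∑ f, selWeight N f * collisions T f) / k ≤ 2⁻¹ := by
    have h := sum_selWeight_mul_collisions_le hN (by omega) hTd
    rw [hT] at h
    push_cast at h
    rw [div_le_iff₀ hkR]
    calc _ ≤ (2 * (k : ℝ)) ^ 2 / (8 * k) := h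
      _ = 2⁻¹ * k := by field_simp; ring
  have hMarkov := markov_lower_tail (selWeight_nonneg N) (sum_selWeight hN)
    (fun f => Nat.cast_nonneg (collisions T f)) hkR
  refine (by linarith : (2 : ℝ)⁻¹ ≤ ∑ f with (collisions T f : ℝ) < k, selWeight N f).trans <|
    sum_selWeight_filter_mono N fun f hf => ?_
  have hT' := card_le_card_image_add_collisions T f
  have himage := card_le_card (image_subset_image (f := f) (subset_univ T))
  have hf' : collisions T f < k := by exact_mod_cast hf
  omega

end Collisions

lemma card_filter_card_lt_le {X Y : Type*} [Fintype X] {N : X → Finset Y}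
    (hN : ∀ u, (N u).Nonempty) (d : ℕ) :
    (#{u | #(N u) < d} : ℝ) ≤ d * ∑ u, (#(N u) : ℝ)⁻¹ := by
  rw [mul_sum]
  calc (#{u | #(N u) < d} : ℝ) = ∑ u with #(N u) < d, (1 : ℝ) := by simp
    _ ≤ ∑ u with #(N u) < d, d * (#(N u) : ℝ)⁻¹ :=
        sum_le_sum fun u hu => by
          rw [le_mul_inv_iff₀ (by exact_mod_cast (hN u).card_pos), one_mul]
          exact_mod_cast (mem_filter.1 hu).2.le
    _ ≤ ∑ u, d * (#(N u) : ℝ)⁻¹ :=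
        sum_le_sum_of_subset_of_nonneg (filter_subset _ _) fun _ _ _ => by positivity

theorem one_eighth_le_sum_selWeight {X Y : Type*} [Fintype X] [DecidableEq X] [Fintype Y]
    [DecidableEq Y] {N : X → Finset Y} (hN : ∀ u, (N u).Nonempty) {M : X → Y} (hM : M.Injective)
    (hMN : ∀ u, M u ∈ N u) {k : ℕ} (hk : 0 < k) (hX : 18 * k ^ 2 ≤ Fintype.card X) :
    (8 : ℝ)⁻¹ ≤ ∑ f with k ≤ #(univ.image f), selWeight N f := by
  have hkR : (1 : ℝ) ≤ k := by exact_mod_cast hk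
  rcases le_or_gt (2 * (k : ℝ)) (∑ u, (#(N u) : ℝ)⁻¹) with hE | hE
  · refine (one_eighth_le_sum_selWeight_of_matching hN hM hMN (by linarith)).trans <|
      sum_selWeight_filter_mono N fun f hf => ?_
    exact_mod_cast (by linarith : (k : ℝ) ≤ #(univ.image f))
  · have hlow : #{u | #(N u) < 8 * k} < 16 * k ^ 2 := by
      have h := card_filter_card_lt_le hN (8 * k)
      have : (#{u | #(N u) < 8 * k} : ℝ) < 16 * k ^ 2 := by push_cast at h; nlinarith
      exact_mod_cast this
    have hsplit := card_filter_add_card_filter_not (s := univ) fun u => #(N u) < 8 * k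
    simp only [not_lt, card_univ] at hsplit
    have hk2 := Nat.le_self_pow two_ne_zero k
    obtain ⟨T, hTsub, hT⟩ := exists_subset_card_eq (s := {u | 8 * k ≤ #(N u)}) (n := 2 * k)
      (by omega)
    exact (by norm_num : (8 : ℝ)⁻¹ ≤ 2⁻¹).trans <|
      half_le_sum_selWeight_of_forall_le_card hN hk hT fun u hu => (mem_filter.1 (hTsub hu)).2

lemma twelve_le_log {x : ℝ} (hx : 10 ^ 6 ≤ x) : 12 ≤ Real.log x := by
  rw [Real.le_log_iff_exp_le (by linarith)]
  calc Real.exp 12 = Real.exp 1 ^ 12 := by rw [← Real.exp_nat_mul]; norm_num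
    _ ≤ 3 ^ 12 := by gcongr; exact Real.exp_one_lt_d9.le.trans (by norm_num)
    _ ≤ x := by linarith

lemma ceil_sqrt_div_log_pos_and_sq_le {m : ℕ} (hm : 10 ^ 6 ≤ m) :
    0 < ⌈√m / Real.log m⌉₊ ∧ 18 * ⌈√m / Real.log m⌉₊ ^ 2 ≤ m := by
  have hmR : (10 : ℝ) ^ 6 ≤ m := by exact_mod_cast hm
  have hL := twelve_le_log hmR
  have hs : 1000 ≤ √(m : ℝ) := Real.le_sqrt_of_sq_le (by linarith)
  have hsq : √(m : ℝ) ^ 2 = m := Real.sq_sqrt (by positivity)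
  have hpos : 0 < √(m : ℝ) / Real.log m := div_pos (by linarith) (by linarith)
  set k := ⌈√(m : ℝ) / Real.log m⌉₊
  have hk : (k : ℝ) ≤ √m / 6 := by
    have h1 : (k : ℝ) < √m / Real.log m + 1 := Nat.ceil_lt_add_one hpos.le
    have h2 : √(m : ℝ) / Real.log m ≤ √m / 12 := by gcongr
    linarith
  refine ⟨Nat.ceil_pos.2 hpos, ?_⟩
  have : (18 * k ^ 2 : ℝ) ≤ m := by nlinarith [mul_self_le_mul_self (Nat.cast_nonneg k) hk]
  exact_mod_cast this

/-- There exist constants `c > 0` and `m₀ ≥ 2` such that for every bipartite graph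
`G = (X, Y, E)` with `|X| = m ≥ m₀`, in which every vertex of `X` has a neighbor and some
matching saturates `X` (equivalently, the maximum matching has size `m`): if each `u ∈ X`
independently selects a uniformly random neighbor, then with probability at least `c`
the number of distinct selected vertices of `Y` is at least `√m / log m`. -/
theorem stmt0 :
    ∃ c : ℝ, 0 < c ∧ ∃ m₀ : ℕ, 2 ≤ m₀ ∧
      ∀ m : ℕ, m₀ ≤ m →
      ∀ (X Y : Type) [Fintype X] [Fintype Y] [DecidableEq Y]
        (N : X → Finset Y) (hN : ∀ u, (N u).Nonempty),
        Fintype.card X = m →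
        (∃ M : X → Y, Function.Injective M ∧ ∀ u, M u ∈ N u) →
        ENNReal.ofReal c ≤
          selMeasure N hN
            {f | Real.sqrt m / Real.log m ≤ (((univ : Finset X).image f).card : ℝ)} := by
  refine ⟨8⁻¹, by norm_num, 10 ^ 6, by norm_num, fun m hm X Y _ _ _ N hN hX ⟨M, hM, hMN⟩ => ?_⟩
  classical
  obtain ⟨hk, hkX⟩ := ceil_sqrt_div_log_pos_and_sq_le hm
  rw [selMeasure_apply]
  refine ENNReal.ofReal_le_ofReal <|
    (one_eighth_le_sum_selWeight hN hM hMN hk (hX ▸ hkX)).trans <|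
      sum_selWeight_filter_mono N fun f hf =>
        (Nat.le_ceil (√(m : ℝ) / Real.log m)).trans (by exact_mod_cast hf)
end

section
/- Let G = (X, Y, E) be a finite bipartite graph in which every vertex of X has at least one neighbor, and let each u ∈ X independently select one of its neighbors in Y uniformly at random. Let Z ⊆ Y be a nonempty set of vertices each of which has degree weight w(v) ≥ 1. Then with probability at least 1/2, the number of vertices of Z that are selected is at least (1 − 2/e)·|Z|. -/
/-!
A vertex `v` escapes every `u ∈ N(v)` independently, so it stays unselected with probability
`∏_{u ∈ N(v)} (1 - 1/deg u) ≤ exp (-w(v)) ≤ 1/e`. Hence the expected number of unselected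
vertices of `Z` is at most `|Z|/e`, and by Markov's inequality at least `2|Z|/e` of them are
unselected with probability at most `1/2`; on the complementary event more than
`(1 - 2/e)|Z|` vertices of `Z` are selected.
-/

open MeasureTheory Finset
open scoped ENNReal

/-- The degree weight of `v ∈ Y`: the sum over neighbors `u` of `v` of `1 / deg u`. -/
noncomputable def degWeight {X Y : Type} [Fintype X] [DecidableEq Y]
    (N : X → Finset Y) (v : Y) : ℝ :=
  ∑ u ∈ univ.filter (fun u => v ∈ N u), 1 / ((N u).card : ℝ)

theorem Real.prod_one_sub_le_exp_neg_sum {ι : Type*} (s : Finset ι) (a : ι → ℝ)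
    (ha : ∀ i ∈ s, a i ≤ 1) : ∏ i ∈ s, (1 - a i) ≤ Real.exp (-∑ i ∈ s, a i) := by
  rw [← sum_neg_distrib, Real.exp_sum]
  exact prod_le_prod (fun i hi => by linarith [ha i hi]) fun i _ => Real.one_sub_le_exp_neg _

theorem MeasureTheory.measureReal_le_card_filter_le {Ω ι : Type*} [MeasurableSpace Ω]
    (μ : Measure Ω) [IsFiniteMeasure μ] (Z : Finset ι) (P : ι → Ω → Prop)
    [∀ v ω, Decidable (P v ω)] (hP : ∀ v ∈ Z, MeasurableSet {ω | P v ω}) {c : ℝ} (hc : 0 < c) :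
    μ.real {ω | c ≤ #(Z.filter (P · ω))} ≤ (∑ v ∈ Z, μ.real {ω | P v ω}) / c := by
  have hcount (ω : Ω) : (#(Z.filter (P · ω)) : ℝ) = ∑ v ∈ Z, {ω | P v ω}.indicator 1 ω := by
    simp [Set.indicator_apply]
  have hint : Integrable (fun ω => (#(Z.filter (P · ω)) : ℝ)) μ := by
    simp_rw [hcount]
    exact integrable_finsetSum _ fun v hv => (integrable_const 1).indicator (hP v hv)
  rw [le_div_iff₀' hc]
  calc c * μ.real {ω | c ≤ #(Z.filter (P · ω))}
      ≤ ∫ ω, (#(Z.filter (P · ω)) : ℝ) ∂μ :=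
        mul_meas_ge_le_integral_of_nonneg (ae_of_all _ fun _ => by positivity) hint c
    _ = ∑ v ∈ Z, μ.real {ω | P v ω} := by
        simp_rw [hcount]
        rw [integral_finsetSum _ fun v hv => (integrable_const 1).indicator (hP v hv)]
        exact sum_congr rfl fun v hv => integral_indicator_one (hP v hv)

theorem MeasureTheory.one_sub_measureReal_le_of_compl_subset {Ω : Type*} [MeasurableSpace Ω]
    (μ : Measure Ω) [IsProbabilityMeasure μ] {S T : Set Ω} (h : Sᶜ ⊆ T) :
    1 - μ.real T ≤ μ.real S := by
  have := measureReal_union_le (μ := μ) S Sᶜ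
  rw [Set.union_compl_self, probReal_univ] at this
  linarith [measureReal_mono (μ := μ) h]

theorem PMF.toMeasure_uniformOfFinset_real_compl_singleton {α : Type*} [MeasurableSpace α]
    [MeasurableSingletonClass α] [DecidableEq α] (s : Finset α) (hs : s.Nonempty) (a : α) :
    (uniformOfFinset s hs).toMeasure.real {a}ᶜ = if a ∈ s then 1 - 1 / (#s : ℝ) else 1 := by
  rw [probReal_compl_eq_one_sub (measurableSet_singleton a), measureReal_def,
    toMeasure_apply_singleton _ _ (measurableSet_singleton a), uniformOfFinset_apply]
  split_ifs <;> simp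

theorem measurableSet_setOf_forall_ne {X Y : Type*} [Countable X] [MeasurableSpace Y]
    [MeasurableSingletonClass Y] (v : Y) : MeasurableSet {f : X → Y | ∀ u, f u ≠ v} := by
  measurability

theorem card_filter_forall_ne_eq_sub {X Y : Type*} [Fintype X] [DecidableEq Y] (Z : Finset Y)
    (f : X → Y) :
    (#(Z.filter fun v => ∀ u, f u ≠ v) : ℝ) = #Z - #(Z.filter fun v => ∃ u, f u = v) := by
  rw [eq_sub_iff_add_eq', ← card_filter_add_card_filter_not (s := Z) (fun v => ∃ u, f u = v)]
  simp

section Selection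

variable {X Y : Type} [Fintype X] (N : X → Finset Y) (hN : ∀ u, (N u).Nonempty)

instance isProbabilityMeasure_selMeasure : IsProbabilityMeasure (selMeasure N hN) := by
  let : MeasurableSpace Y := ⊤
  unfold selMeasure
  infer_instance

theorem selMeasure_real_forall_ne [DecidableEq Y] (v : Y) :
    (selMeasure N hN).real {f | ∀ u, f u ≠ v} =
      ∏ u ∈ univ.filter (v ∈ N ·), (1 - 1 / (#(N u) : ℝ)) := by
  let : MeasurableSpace Y := ⊤
  have : {f : X → Y | ∀ u, f u ≠ v} = Set.univ.pi fun _ => {v}ᶜ := by ext; simp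
  rw [this, selMeasure, measureReal_def, Measure.pi_pi, ENNReal.toReal_prod, prod_filter]
  exact prod_congr rfl fun u _ => PMF.toMeasure_uniformOfFinset_real_compl_singleton _ _ v

theorem selMeasure_real_forall_ne_le [DecidableEq Y] (v : Y) :
    (selMeasure N hN).real {f | ∀ u, f u ≠ v} ≤ Real.exp (-degWeight N v) := by
  rw [selMeasure_real_forall_ne, degWeight]
  refine Real.prod_one_sub_le_exp_neg_sum _ _ fun u _ => ?_
  rw [div_le_one₀ (by simpa using (hN u).card_pos)]
  exact_mod_cast (hN u).card_pos

theorem selMeasure_real_le_card_filter_forall_ne_le [DecidableEq Y] (Z : Finset Y) {w : ℝ}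
    (hw : ∀ v ∈ Z, w ≤ degWeight N v) {c : ℝ} (hc : 0 < c) :
    (selMeasure N hN).real {f | c ≤ #(Z.filter fun v => ∀ u, f u ≠ v)} ≤
      #Z * Real.exp (-w) / c := by
  let : MeasurableSpace Y := ⊤
  calc (selMeasure N hN).real {f | c ≤ #(Z.filter fun v => ∀ u, f u ≠ v)}
      ≤ (∑ v ∈ Z, (selMeasure N hN).real {f | ∀ u, f u ≠ v}) / c :=
        measureReal_le_card_filter_le (selMeasure N hN) Z (fun v f => ∀ u, f u ≠ v)
          (fun v _ => measurableSet_setOf_forall_ne v) hc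
    _ ≤ #Z * Real.exp (-w) / c := by
        gcongr
        refine (sum_le_card_nsmul Z _ _ fun v hv => ?_).trans_eq (nsmul_eq_mul _ _)
        exact (selMeasure_real_forall_ne_le N hN v).trans
          (Real.exp_le_exp.2 (neg_le_neg (hw v hv)))

end Selection

theorem stmt2_general (X Y : Type) [Fintype X] [DecidableEq Y]
    (N : X → Finset Y) (hN : ∀ u, (N u).Nonempty)
    (Z : Finset Y) (hZne : Z.Nonempty) (hw : ∀ v ∈ Z, 1 ≤ degWeight N v) :
    (1 / 2 : ℝ≥0∞) ≤
      selMeasure N hN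
        {f | (1 - 2 / Real.exp 1) * (Z.card : ℝ) ≤
              ((Z.filter (fun v => ∃ u, f u = v)).card : ℝ)} := by
  let : MeasurableSpace Y := ⊤
  set c := 2 * (#Z : ℝ) / Real.exp 1 with hc_def
  have hc : 0 < c := by have := hZne.card_pos; positivity
  have hmissed : (selMeasure N hN).real {f | c ≤ #(Z.filter fun v => ∀ u, f u ≠ v)} ≤ 1 / 2 :=
    (selMeasure_real_le_card_filter_forall_ne_le N hN Z hw hc).trans_eq <| by
      rw [hc_def, Real.exp_neg]
      field_simp
  have hcompl : {f : X → Y | (1 - 2 / Real.exp 1) * (Z.card : ℝ) ≤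
      ((Z.filter (fun v => ∃ u, f u = v)).card : ℝ)}ᶜ ⊆
        {f | c ≤ #(Z.filter fun v => ∀ u, f u ≠ v)} := by
    intro f hf
    have hcomplement : (1 - 2 / Real.exp 1) * #Z = #Z - c := by rw [hc_def]; ring
    simp only [Set.mem_compl_iff, Set.mem_ofPred_eq, not_le] at hf ⊢
    linarith [card_filter_forall_ne_eq_sub Z f]
  have hhalf := (one_sub_measureReal_le_of_compl_subset (selMeasure N hN) hcompl).trans' <|
    sub_le_sub_left hmissed 1
  rw [← ofReal_measureReal]
  calc (1 / 2 : ℝ≥0∞) = ENNReal.ofReal (1 - 1 / 2) := by norm_num [ENNReal.ofReal_div_of_pos]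
    _ ≤ _ := ENNReal.ofReal_le_ofReal hhalf

/-- If `Z ⊆ Y` is a nonempty set of vertices each of degree weight at least `1`, then with
probability at least `1/2` at least `(1 - 2/e) * |Z|` vertices of `Z` are selected. -/
theorem stmt2 (X Y : Type) [Fintype X] [Fintype Y] [DecidableEq Y]
    (N : X → Finset Y) (hN : ∀ u, (N u).Nonempty)
    (Z : Finset Y) (hZne : Z.Nonempty) (hw : ∀ v ∈ Z, 1 ≤ degWeight N v) :
    (1 / 2 : ℝ≥0∞) ≤
      selMeasure N hN
        {f | (1 - 2 / Real.exp 1) * (Z.card : ℝ) ≤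
              ((Z.filter (fun v => ∃ u, f u = v)).card : ℝ)} :=
  stmt2_general X Y N hN Z hZne hw
end

section
/- Let G = (X, Y, E) be a finite bipartite graph with |X| = m ≥ 1 that contains a matching saturating X, and let Z ⊆ Y satisfy |Z| ≤ √m − 1. If each u ∈ X independently selects one of its neighbors in Y uniformly at random, then the expected number of vertices u ∈ X whose selected neighbor lies in Y∖Z is at least (m − |Z|)/√m, and hence at least √m − 1. -/
/-!
By linearity of expectation the expected count is `∑ᵤ |N(u) ∖ Z| / deg u`. Fix a matching
`M` saturating `X` and put `s = √m`, so `|Z| ≤ s - 1`. Every `u` with `M u ∉ Z` contributes at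
least `1 / s`: if `deg u ≤ s` it has a neighbour outside `Z`, and if `deg u > s` at most a
fraction `|Z| / deg u < |Z| / s ≤ 1 - 1 / s` of its neighbours lies in `Z`. Injectivity of `M`
leaves at least `m - |Z|` such `u`, and `(m - |Z|) / s ≥ s - 1` because `|Z| ≤ s`.
-/

open MeasureTheory Finset
open scoped ENNReal

section Selection

variable {X Y : Type} [Fintype X] (N : X → Finset Y) (hN : ∀ u, (N u).Nonempty)

theorem selMeasure_eval_mem (p : Y → Prop) [DecidablePred p] (u : X) :
    selMeasure N hN {f | p (f u)} = #{v ∈ N u | p v} / #(N u) := by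
  classical
  let _ : MeasurableSpace Y := ⊤
  have hpre : {f : X → Y | p (f u)} =
      Set.univ.pi (Function.update (fun _ => Set.univ) u {v | p v}) := by
    rw [Set.univ_pi_update_univ]; rfl
  rw [hpre, selMeasure, Measure.pi_pi, Finset.prod_eq_single_of_mem u (mem_univ u)
    (fun i _ hi => by rw [Function.update_of_ne hi]; simp), Function.update_self,
    PMF.toMeasure_uniformOfFinset_apply _ _ MeasurableSpace.measurableSet_top]
  congr 3
  ext v; simp

theorem lintegral_card_filter_selMeasure (p : Y → Prop) [DecidablePred p] :
    ∫⁻ f, (#{u | p (f u)} : ℝ≥0∞) ∂(selMeasure N hN) =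
      ENNReal.ofReal (∑ u, (#{v ∈ N u | p v} : ℝ) / #(N u)) := by
  let _ : MeasurableSpace Y := ⊤
  have hmeas : ∀ u : X, MeasurableSet {f : X → Y | p (f u)} :=
    fun u => measurable_pi_apply u MeasurableSpace.measurableSet_top
  have hcard : ∀ f : X → Y,
      (#{u | p (f u)} : ℝ≥0∞) = ∑ u, {g : X → Y | p (g u)}.indicator 1 f := by
    intro f
    rw [card_filter, Nat.cast_sum]
    exact sum_congr rfl fun u _ => by simp [Set.indicator_apply]
  simp_rw [hcard]
  rw [lintegral_finsetSum _ fun u _ => measurable_one.indicator (hmeas u)]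
  simp_rw [lintegral_indicator_one (hmeas _), selMeasure_eval_mem]
  rw [ENNReal.ofReal_sum_of_nonneg fun u _ => by positivity]
  refine sum_congr rfl fun u _ => ?_
  rw [ENNReal.ofReal_div_of_pos (by exact_mod_cast (hN u).card_pos), ENNReal.ofReal_natCast,
    ENNReal.ofReal_natCast]

end Selection

theorem Finset.one_div_le_card_sdiff_div_card {Y : Type} [DecidableEq Y] {A Z : Finset Y}
    {s : ℝ} (hZ : (#Z : ℝ) ≤ s - 1) (hAZ : (A \ Z).Nonempty) : 1 / s ≤ (#(A \ Z) : ℝ) / #A := by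
  have hs : 0 < s := by linarith [(#Z).cast_nonneg (α := ℝ)]
  have hA : (0 : ℝ) < #A := by exact_mod_cast hAZ.mono sdiff_subset |>.card_pos
  rcases le_or_gt (#A : ℝ) s with hsmall | hlarge
  · calc 1 / s ≤ 1 / #A := one_div_le_one_div_of_le hA hsmall
      _ ≤ #(A \ Z) / #A := by
        gcongr; exact_mod_cast hAZ.card_pos
  · have hcover : (#A : ℝ) ≤ #(A \ Z) + #Z := by exact_mod_cast card_le_card_sdiff_add_card
    rw [div_le_div_iff₀ hs hA]
    nlinarith [(#Z).cast_nonneg (α := ℝ)]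

theorem Function.Injective.card_le_card_filter_notMem_add_card {X Y : Type} [Fintype X]
    [DecidableEq Y] {M : X → Y} (hM : Function.Injective M) (Z : Finset Y) :
    Fintype.card X ≤ #{u | M u ∉ Z} + #Z := by
  have hin : #{u | M u ∈ Z} ≤ #Z :=
    card_le_card_of_injOn M (fun u hu => (mem_filter.1 hu).2) hM.injOn
  have := card_filter_add_card_filter_not (s := univ) (fun u => M u ∉ Z)
  simp only [not_not, card_univ] at this
  omega

theorem card_sub_div_le_sum_card_sdiff_div_card {X Y : Type} [Fintype X] [DecidableEq Y]
    (N : X → Finset Y) {M : X → Y} (hM : Function.Injective M) (hMN : ∀ u, M u ∈ N u)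
    {Z : Finset Y} {s : ℝ} (hZ : (#Z : ℝ) ≤ s - 1) :
    ((Fintype.card X : ℝ) - #Z) / s ≤ ∑ u, (#(N u \ Z) : ℝ) / #(N u) := by
  have hs : 0 < s := by linarith [(#Z).cast_nonneg (α := ℝ)]
  calc ((Fintype.card X : ℝ) - #Z) / s ≤ #{u | M u ∉ Z} / s := by
        gcongr
        exact sub_le_iff_le_add.2 (by exact_mod_cast hM.card_le_card_filter_notMem_add_card Z)
    _ = ∑ u, if M u ∉ Z then 1 / s else 0 := by
        rw [sum_ite, sum_const_zero, add_zero, sum_const, nsmul_eq_mul, mul_one_div]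
    _ ≤ ∑ u, (#(N u \ Z) : ℝ) / #(N u) := by
        refine sum_le_sum fun u _ => ?_
        split_ifs with hu
        · positivity
        · exact one_div_le_card_sdiff_div_card hZ ⟨M u, mem_sdiff.2 ⟨hMN u, hu⟩⟩

theorem stmt5_general (X Y : Type) [Fintype X] [DecidableEq Y]
    (N : X → Finset Y) (hN : ∀ u, (N u).Nonempty)
    (m : ℕ) (hcard : Fintype.card X = m)
    (hM : ∃ M : X → Y, Function.Injective M ∧ ∀ u, M u ∈ N u)
    (Z : Finset Y) (hZ : (Z.card : ℝ) ≤ Real.sqrt m - 1) :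
    ENNReal.ofReal (((m : ℝ) - (Z.card : ℝ)) / Real.sqrt m) ≤
      ∫⁻ f, ((univ.filter (fun u => f u ∉ Z)).card : ℝ≥0∞) ∂(selMeasure N hN) ∧
    ENNReal.ofReal (Real.sqrt m - 1) ≤
      ∫⁻ f, ((univ.filter (fun u => f u ∉ Z)).card : ℝ≥0∞) ∂(selMeasure N hN) := by
  obtain ⟨M, hMinj, hMN⟩ := hM
  have hbound : ((m : ℝ) - #Z) / √m ≤ ∑ u, (#(N u \ Z) : ℝ) / #(N u) := by
    rw [← hcard] at hZ ⊢
    exact card_sub_div_le_sum_card_sdiff_div_card N hMinj hMN hZ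
  have hsqrt : √m - 1 ≤ ((m : ℝ) - #Z) / √m := by
    have hs : 0 < √(m : ℝ) := by linarith [(#Z).cast_nonneg (α := ℝ)]
    rw [le_div_iff₀ hs]
    nlinarith [Real.mul_self_sqrt (Nat.cast_nonneg (α := ℝ) m)]
  have hexp : ∫⁻ f, (#{u | f u ∉ Z} : ℝ≥0∞) ∂(selMeasure N hN) =
      ENNReal.ofReal (∑ u, (#(N u \ Z) : ℝ) / #(N u)) := by
    simp_rw [lintegral_card_filter_selMeasure N hN (· ∉ Z), sdiff_eq_filter]
  rw [hexp]
  exact ⟨ENNReal.ofReal_le_ofReal hbound, ENNReal.ofReal_le_ofReal (hsqrt.trans hbound)⟩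

/-- If `|X| = m ≥ 1`, some matching saturates `X`, and `|Z| ≤ √m - 1`, then the expected
number of vertices of `X` whose uniformly random selected neighbor lies outside `Z` is at
least `(m - |Z|)/√m`, hence at least `√m - 1`. -/
theorem stmt5 (X Y : Type) [Fintype X] [Fintype Y] [DecidableEq Y]
    (N : X → Finset Y) (hN : ∀ u, (N u).Nonempty)
    (m : ℕ) (hm : 1 ≤ m) (hcard : Fintype.card X = m)
    (hM : ∃ M : X → Y, Function.Injective M ∧ ∀ u, M u ∈ N u)
    (Z : Finset Y) (hZ : (Z.card : ℝ) ≤ Real.sqrt m - 1) :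
    ENNReal.ofReal (((m : ℝ) - (Z.card : ℝ)) / Real.sqrt m) ≤
      ∫⁻ f, ((univ.filter (fun u => f u ∉ Z)).card : ℝ≥0∞) ∂(selMeasure N hN) ∧
    ENNReal.ofReal (Real.sqrt m - 1) ≤
      ∫⁻ f, ((univ.filter (fun u => f u ∉ Z)).card : ℝ≥0∞) ∂(selMeasure N hN) :=
  stmt5_general X Y N hN m hcard hM Z hZ
end

section
/- Let G = (X, Y, E) be a finite bipartite graph with |X| = m ≥ 2 in which every vertex of X has at least one neighbor, and let each u ∈ X independently select one of its neighbors in Y uniformly at random. Let W ⊆ Y be a set of vertices each having degree weight w(v) ≤ 1, and let t = 8 + ⌈2·log₂ m⌉. Then the probability that some vertex of W is selected by at least t vertices of X is at most |W| / (256·m²). -/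
/-!
For a fixed `v`, the event "at least `t` vertices select `v`" is covered by the events
"every vertex of `S` selects `v`" over the `t`-sets `S`, whose probabilities are
`∏_{u ∈ S} 1/deg u`. Their sum is the elementary symmetric polynomial `e_t` of the numbers
`1/deg u`, and `t! e_t ≤ e_1^t = w(v)^t ≤ 1`. Hence each `v ∈ W` is overloaded with
probability at most `1/t! ≤ 2^{-t} ≤ 1/(256 m²)`, and a union bound over `W` concludes.
-/

open MeasureTheory Finset

open scoped ENNReal Nat

namespace Finset

variable {ι : Type*} [DecidableEq ι]

theorem sum_powersetCard_succ_sum_erase {M : Type*} [AddCommMonoid M] (s : Finset ι)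
    (g : ι → Finset ι → M) (k : ℕ) :
    ∑ T ∈ s.powersetCard (k + 1), ∑ a ∈ T, g a (T.erase a) =
      ∑ S ∈ s.powersetCard k, ∑ a ∈ s \ S, g a S := by
  rw [sum_sigma', sum_sigma']
  refine sum_nbij' (fun x => ⟨x.1.erase x.2, x.2⟩) (fun x => ⟨insert x.2 x.1, x.2⟩)
    ?_ ?_ ?_ ?_ (fun _ _ => rfl)
  · rintro ⟨T, a⟩ h
    simp only [mem_sigma, mem_powersetCard, mem_sdiff] at h ⊢
    obtain ⟨⟨hTs, hTc⟩, ha⟩ := h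
    exact ⟨⟨(erase_subset _ _).trans hTs, by rw [card_erase_of_mem ha, hTc]; rfl⟩,
      hTs ha, notMem_erase _ _⟩
  · rintro ⟨S, a⟩ h
    simp only [mem_sigma, mem_powersetCard, mem_sdiff] at h ⊢
    obtain ⟨⟨hSs, hSc⟩, has, haS⟩ := h
    exact ⟨⟨insert_subset has hSs, by rw [card_insert_of_notMem haS, hSc]⟩, mem_insert_self _ _⟩
  · rintro ⟨T, a⟩ h
    simp only [mem_sigma] at h
    simp [insert_erase h.2]
  · rintro ⟨S, a⟩ h
    simp only [mem_sigma, mem_sdiff] at h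
    simp [erase_insert h.2.2]

variable {R : Type*} [CommSemiring R] [PartialOrder R] [CanonicallyOrderedAdd R]
  [IsOrderedRing R]

theorem succ_mul_sum_powersetCard_succ_prod_le (s : Finset ι) (p : ι → R) (k : ℕ) :
    ((k : R) + 1) * ∑ T ∈ s.powersetCard (k + 1), ∏ i ∈ T, p i ≤
      (∑ i ∈ s, p i) * ∑ S ∈ s.powersetCard k, ∏ i ∈ S, p i := by
  have h_expand : ((k : R) + 1) * ∑ T ∈ s.powersetCard (k + 1), ∏ i ∈ T, p i =
      ∑ T ∈ s.powersetCard (k + 1), ∑ a ∈ T, p a * ∏ i ∈ T.erase a, p i := by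
    rw [mul_sum]
    refine sum_congr rfl fun T hT => ?_
    rw [sum_congr rfl fun a ha => mul_prod_erase T p ha, sum_const, (mem_powersetCard.1 hT).2,
      nsmul_eq_mul, Nat.cast_succ]
  rw [h_expand, sum_powersetCard_succ_sum_erase s (fun a S => p a * ∏ i ∈ S, p i), mul_sum]
  gcongr with S
  rw [← sum_mul]
  gcongr
  exact sdiff_subset

theorem factorial_mul_sum_powersetCard_prod_le_pow (s : Finset ι) (p : ι → R) (k : ℕ) :
    (k ! : R) * ∑ T ∈ s.powersetCard k, ∏ i ∈ T, p i ≤ (∑ i ∈ s, p i) ^ k := by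
  induction k with
  | zero => simp
  | succ k ih =>
    calc ((k + 1)! : R) * ∑ T ∈ s.powersetCard (k + 1), ∏ i ∈ T, p i
        = k ! * (((k : R) + 1) * ∑ T ∈ s.powersetCard (k + 1), ∏ i ∈ T, p i) := by
          push_cast [Nat.factorial_succ]; ring
      _ ≤ k ! * ((∑ i ∈ s, p i) * ∑ S ∈ s.powersetCard k, ∏ i ∈ S, p i) := by
          gcongr _ * ?_
          exact succ_mul_sum_powersetCard_succ_prod_le s p k
      _ = (∑ i ∈ s, p i) * (k ! * ∑ S ∈ s.powersetCard k, ∏ i ∈ S, p i) := by ring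
      _ ≤ (∑ i ∈ s, p i) ^ (k + 1) := by rw [pow_succ']; gcongr

end Finset

theorem Nat.two_pow_le_factorial {n : ℕ} (hn : 4 ≤ n) : 2 ^ n ≤ n ! :=
  calc 2 ^ n = 2 ^ 4 * 2 ^ (n - 4) := by rw [← pow_add, Nat.add_sub_cancel' hn]
    _ ≤ 4 ! * 4 ^ (n - 4) := by gcongr <;> decide
    _ ≤ n ! := Nat.factorial_mul_pow_sub_le_factorial hn

theorem sq_le_two_pow_ceil_two_mul_logb {x : ℝ} (hx : 0 < x) :
    x ^ 2 ≤ 2 ^ ⌈2 * Real.logb 2 x⌉₊ := by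
  calc x ^ 2 = (2 : ℝ) ^ (2 * Real.logb 2 x) := by
        rw [mul_comm, Real.rpow_mul zero_le_two, Real.rpow_logb two_pos (by norm_num) hx,
          Real.rpow_two]
    _ ≤ (2 : ℝ) ^ (⌈2 * Real.logb 2 x⌉₊ : ℝ) :=
        Real.rpow_le_rpow_of_exponent_le one_le_two (Nat.le_ceil _)
    _ = 2 ^ ⌈2 * Real.logb 2 x⌉₊ := Real.rpow_natCast _ _

namespace MeasureTheory.Measure

variable {ι α : Type*} [Fintype ι] [MeasurableSpace α] (μ : ι → Measure α)
  [∀ i, IsProbabilityMeasure (μ i)]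

theorem factorial_mul_pi_le_card_filter_mem_le_pow (A : Set α) [DecidablePred (· ∈ A)]
    (t : ℕ) :
    (t ! : ℝ≥0∞) * Measure.pi μ {f | t ≤ #{i | f i ∈ A}} ≤ (∑ i, μ i A) ^ t := by
  classical
  have h_cover : {f : ι → α | t ≤ #{i | f i ∈ A}} ⊆
      ⋃ S ∈ (univ : Finset ι).powersetCard t, (S : Set ι).pi fun _ => A := by
    intro f hf
    obtain ⟨S, hS, hSc⟩ := exists_subset_card_eq hf
    exact Set.mem_biUnion (mem_powersetCard.2 ⟨subset_univ S, hSc⟩)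
      fun i hi => (mem_filter.1 (hS hi)).2
  calc (t ! : ℝ≥0∞) * Measure.pi μ {f | t ≤ #{i | f i ∈ A}}
      ≤ t ! * ∑ S ∈ (univ : Finset ι).powersetCard t, ∏ i ∈ S, μ i A := by
        gcongr
        exact (measure_mono h_cover).trans <| (measure_biUnion_finset_le _ _).trans_eq <|
          Finset.sum_congr rfl fun S _ => pi_pi_finset μ _ S
    _ ≤ (∑ i, μ i A) ^ t := factorial_mul_sum_powersetCard_prod_le_pow _ _ t

end MeasureTheory.Measure

theorem sum_uniformOfFinset_apply_eq_ofReal_degWeight {X Y : Type} [Fintype X]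
    [DecidableEq Y] (N : X → Finset Y) (hN : ∀ u, (N u).Nonempty) (v : Y) :
    ∑ u, PMF.uniformOfFinset (N u) (hN u) v = ENNReal.ofReal (degWeight N v) := by
  rw [degWeight, ENNReal.ofReal_sum_of_nonneg (fun u _ => by positivity), sum_filter]
  refine sum_congr rfl fun u _ => ?_
  rw [PMF.uniformOfFinset_apply]
  split_ifs
  · rw [one_div, ENNReal.ofReal_inv_of_pos (mod_cast (hN u).card_pos), ENNReal.ofReal_natCast]
  · rfl

theorem selMeasure_le_card_filter_eq_le_inv_factorial {X Y : Type} [Fintype X]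
    [DecidableEq Y] (N : X → Finset Y) (hN : ∀ u, (N u).Nonempty) {v : Y}
    (hv : degWeight N v ≤ 1) (t : ℕ) :
    selMeasure N hN {f | t ≤ #{u | f u = v}} ≤ (t ! : ℝ≥0∞)⁻¹ := by
  let : MeasurableSpace Y := ⊤
  have h_load : ∑ u, (PMF.uniformOfFinset (N u) (hN u)).toMeasure {v} ≤ 1 := by
    simp only [PMF.toMeasure_apply_singleton _ _ (MeasurableSpace.measurableSet_top),
      sum_uniformOfFinset_apply_eq_ofReal_degWeight]
    exact ENNReal.ofReal_le_one.2 hv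
  have h := Measure.factorial_mul_pi_le_card_filter_mem_le_pow
    (fun u => (PMF.uniformOfFinset (N u) (hN u)).toMeasure) {v} t
  simp only [Set.mem_singleton_iff] at h
  rw [ENNReal.le_inv_iff_mul_le, mul_comm]
  exact h.trans (pow_le_one₀ bot_le h_load)

theorem stmt8_general (X Y : Type) [Fintype X] [DecidableEq Y]
    (N : X → Finset Y) (hN : ∀ u, (N u).Nonempty)
    (m : ℕ) (hm : 2 ≤ m)
    (W : Finset Y) (hw : ∀ v ∈ W, degWeight N v ≤ 1)
    (t : ℕ) (ht : t = 8 + ⌈2 * Real.logb 2 m⌉₊) :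
    selMeasure N hN
        {f | ∃ v ∈ W, t ≤ (univ.filter (fun u => f u = v)).card} ≤
      ENNReal.ofReal ((W.card : ℝ) / (256 * (m : ℝ) ^ 2)) := by
  have h_factorial : 256 * m ^ 2 ≤ t ! := by
    have h : (256 * m ^ 2 : ℝ) ≤ 2 ^ t := by
      rw [ht, pow_add]
      norm_num
      exact sq_le_two_pow_ceil_two_mul_logb (by positivity)
    exact (Nat.cast_le.1 (by exact_mod_cast h)).trans (Nat.two_pow_le_factorial (by omega))
  calc selMeasure N hN {f | ∃ v ∈ W, t ≤ #{u | f u = v}}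
      = selMeasure N hN (⋃ v ∈ W, {f | t ≤ #{u | f u = v}}) := by
        congr 1; ext; simp
    _ ≤ ∑ v ∈ W, selMeasure N hN {f | t ≤ #{u | f u = v}} := measure_biUnion_finset_le _ _
    _ ≤ ∑ v ∈ W, ((256 * m ^ 2 : ℕ) : ℝ≥0∞)⁻¹ := sum_le_sum fun v hv =>
        (selMeasure_le_card_filter_eq_le_inv_factorial N hN (hw v hv) t).trans (by gcongr)
    _ = ENNReal.ofReal ((W.card : ℝ) / (256 * (m : ℝ) ^ 2)) := by
      rw [sum_const, nsmul_eq_mul, ← div_eq_mul_inv, ENNReal.ofReal_div_of_pos (by positivity)]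
      norm_cast

/-- If `|X| = m ≥ 2`, `W ⊆ Y` consists of vertices of degree weight at most `1`, and
`t = 8 + ⌈2·log₂ m⌉`, then the probability that some vertex of `W` is selected by at
least `t` vertices of `X` is at most `|W| / (256·m²)`. -/
theorem stmt8 (X Y : Type) [Fintype X] [Fintype Y] [DecidableEq Y]
    (N : X → Finset Y) (hN : ∀ u, (N u).Nonempty)
    (m : ℕ) (hm : 2 ≤ m) (hcard : Fintype.card X = m)
    (W : Finset Y) (hw : ∀ v ∈ W, degWeight N v ≤ 1)
    (t : ℕ) (ht : t = 8 + ⌈2 * Real.logb 2 m⌉₊) :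
    selMeasure N hN
        {f | ∃ v ∈ W, t ≤ (univ.filter (fun u => f u = v)).card} ≤
      ENNReal.ofReal ((W.card : ℝ) / (256 * (m : ℝ) ^ 2)) :=
  stmt8_general X Y N hN m hm W hw t ht
end
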